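/- The orbit space of the upper half-plane ℍ by the cyclic subgroup of SL(2,ℝ) generated by the single hyperbolic element M(3/2, 1/12) = !![−18, 323/12; 12, −18], equipped with the quotient topology, is homeomorphic to the punctured complex plane ℂ \ {0} (a cylinder). -/

import Mathlib

open UpperHalfPlane MatrixGroups

noncomputable section

/-- `N(β,β',r)` is the element of `SL(2,ℝ)` whose Möbius transformation has isometric circle
the half-circle of radius `r` centered at `β`, mapped onto the half-circle of radius `r`
centered at `β'`. -/
def Nmat (β β' r : ℝ) (hr : r ≠ 0) : SL(2, ℝ) :=
  ⟨!![β' / r, -(β * β' + r ^ 2) / r; 1 / r, -β / r], by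
    rw [Matrix.det_fin_two_of]; field_simp; ring⟩

/-- `M(α,r) := N(α, −α, r)`. -/
def Mmat (a r : ℝ) (hr : r ≠ 0) : SL(2, ℝ) := Nmat a (-a) r hr

/-- The hyperbolic element `M(3/2, 1/12)`. -/
def g₀ : SL(2, ℝ) := Mmat (3 / 2) (1 / 12) (by norm_num)

/-- The orbit space of `ℍ` by the cyclic subgroup generated by `M(3/2, 1/12)`, with the
quotient topology. -/
abbrev Cyl := Quotient (MulAction.orbitRel (Subgroup.zpowers g₀) ℍ)

/-!
The matrix `M(α, r)` (with `|r| < α`) fixes the two boundary points `±p`, `p = √(α² - r²)`.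
The Möbius map `z ↦ (z - p) / (z + p)` sends them to `0` and `∞` and conjugates `M(α, r)` to
the dilation `z ↦ λ z` with `λ = (α + p) / (α - p) > 1`. In the coordinates
`z ↦ (log Im z, Re z / Im z)`, which identify `ℍ` with `ℝ × ℝ`, a dilation is a translation of
the first factor, so the orbit space is `(ℝ / log λ ℤ) × ℝ`, a circle times a line, which is
`ℂ \ {0}` in polar coordinates.
-/

open Complex

namespace UpperHalfPlane

def logImCoords : ℍ ≃ₜ ℝ × ℝ where
  toFun z := (Real.log z.im, z.re / z.im)
  invFun p := ⟨(Real.exp p.1 : ℂ) * (p.2 + I), by simpa [-ofReal_exp] using Real.exp_pos p.1⟩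
  left_inv z := by
    have := z.im_pos.ne'
    ext1
    apply Complex.ext
    · simp [-ofReal_exp, Real.exp_log z.im_pos]
      field_simp
    · simp [-ofReal_exp, Real.exp_log z.im_pos]
  right_inv p := by simp [-ofReal_exp]
  continuous_toFun := by
    have := continuous_im
    have := continuous_re
    fun_prop (disch := exact fun z => z.im_pos.ne')
  continuous_invFun := isEmbedding_coe.continuous_iff.2 (by fun_prop)

lemma logImCoords_apply (z : ℍ) : logImCoords z = (Real.log z.im, z.re / z.im) := rfl

lemma logImCoords_pos_real_smul (t : {x : ℝ // 0 < x}) (z : ℍ) :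
    logImCoords (t • z) = ((logImCoords z).1 + Real.log t, (logImCoords z).2) := by
  have ht := t.2.ne'
  simp only [logImCoords_apply, pos_real_im, pos_real_re,
    Real.log_mul ht z.im_pos.ne', mul_div_mul_left _ _ ht, add_comm]

end UpperHalfPlane

lemma AddCircle.coe_eq_coe_iff_exists_int {L a b : ℝ} :
    (a : AddCircle L) = b ↔ ∃ n : ℤ, a = b + n * L := by
  rw [← sub_eq_zero, ← AddCircle.coe_sub, AddCircle.coe_eq_zero_iff]
  exact exists_congr fun n => by rw [zsmul_eq_mul]; constructor <;> intro <;> linarith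

def addCircleProdRealHomeomorphComplZero {L : ℝ} (hL : L ≠ 0) :
    AddCircle L × ℝ ≃ₜ ({0}ᶜ : Set ℂ) :=
  ((AddCircle.homeomorphCircle hL).prodCongr Real.expOrderIso.toHomeomorph).trans
    (homeomorphUnitSphereProd ℂ).symm

section OrbitSpace

variable {G X Y : Type*} [Group G] [MulAction G X]

lemma apply_zpow_smul_of_apply_smul {Φ : X → ℝ × Y} {g : G} {L : ℝ}
    (h : ∀ x, Φ (g • x) = ((Φ x).1 + L, (Φ x).2)) (n : ℤ) (x : X) :
    Φ (g ^ n • x) = ((Φ x).1 + n * L, (Φ x).2) := by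
  induction n using Int.induction_on generalizing x with
  | zero => simp
  | succ n ih =>
    rw [zpow_add_one, mul_smul, ih, h]
    push_cast
    ring_nf
  | pred n ih =>
    obtain ⟨h1, h2⟩ := Prod.ext_iff.1 (h (g ^ (-(n : ℤ) - 1) • x))
    rw [← mul_smul, ← zpow_one_add, add_sub_cancel, ih] at h1 h2
    refine Prod.ext ?_ h2.symm
    push_cast at h1 ⊢
    linarith

lemma orbitRel_zpowers_iff {g : G} {x y : X} :
    MulAction.orbitRel (Subgroup.zpowers g) X x y ↔ ∃ n : ℤ, g ^ n • y = x := by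
  rw [MulAction.orbitRel_apply, MulAction.mem_orbit_iff, Subgroup.exists_zpowers]
  rfl

lemma exists_zpow_smul_eq_iff {Φ : X → ℝ × Y} (hΦ : Function.Injective Φ) {g : G} {L : ℝ}
    (h : ∀ x, Φ (g • x) = ((Φ x).1 + L, (Φ x).2)) {x y : X} :
    (∃ n : ℤ, g ^ n • y = x) ↔ ((Φ x).1 : AddCircle L) = (Φ y).1 ∧ (Φ x).2 = (Φ y).2 := by
  simp only [← hΦ.eq_iff, apply_zpow_smul_of_apply_smul h,
    AddCircle.coe_eq_coe_iff_exists_int, Prod.ext_iff]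
  exact exists_and_right.trans (and_congr (exists_congr fun _ => eq_comm) eq_comm)

variable [TopologicalSpace X] [TopologicalSpace Y]

def zpowersQuotientHomeomorphAddCircleProd (Φ : X ≃ₜ ℝ × Y) (g : G) (L : ℝ)
    (h : ∀ x, Φ (g • x) = ((Φ x).1 + L, (Φ x).2)) :
    Quotient (MulAction.orbitRel (Subgroup.zpowers g) X) ≃ₜ AddCircle L × Y :=
  let p : C(X, AddCircle L × Y) := ⟨Prod.map (↑) id ∘ Φ, by fun_prop⟩
  have hp : Topology.IsQuotientMap p :=
    (QuotientAddGroup.isOpenQuotientMap_mk.prodMap .id).isQuotientMap.comp Φ.isQuotientMap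
  (Homeomorph.Quotient.congrRight fun x y => by
    rw [orbitRel_zpowers_iff, exists_zpow_smul_eq_iff Φ.injective h]
    exact (Prod.ext_iff (x := p x) (y := p y)).symm).trans hp.homeomorph

end OrbitSpace

namespace UpperHalfPlane

lemma coe_Mmat_smul {α r : ℝ} (hr : r ≠ 0) (z : ℍ) :
    ((Mmat α r hr • z : ℍ) : ℂ) = (-α * z + (α ^ 2 - r ^ 2)) / (z - α) := by
  have hz : (z : ℂ) - α ≠ 0 := sub_ne_zero.2 (z.ne_ofReal α)
  have hr' : (r : ℂ) ≠ 0 := by exact_mod_cast hr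
  rw [coe_specialLinearGroup_apply]
  simp [Mmat, Nmat]
  have hden : (r : ℂ)⁻¹ * z + -α / r = (z - α) / r := by ring
  rw [hden]
  field_simp
  ring

def axisToImag (p : ℝ) (hp : 0 < p) : GL (Fin 2) ℝ :=
  .mkOfDetNeZero !![1, -p; 1, p] (by simp [Matrix.det_fin_two_of]; positivity)

lemma coe_axisToImag_smul {p : ℝ} (hp : 0 < p) (z : ℍ) :
    ((axisToImag p hp • z : ℍ) : ℂ) = (z - p) / (z + p) := by
  rw [coe_smul_of_det_pos (by simp [axisToImag, Matrix.det_fin_two_of]; positivity)]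
  simp [axisToImag, num, denom]
  ring

lemma axisToImag_smul_Mmat_smul {α r p : ℝ} (hr : r ≠ 0) (hp : 0 < p) (hpα : p < α)
    (hpαr : p ^ 2 = α ^ 2 - r ^ 2) (z : ℍ) :
    axisToImag p hp • Mmat α r hr • z =
      (⟨(α + p) / (α - p), div_pos (by linarith) (by linarith)⟩ : {x : ℝ // 0 < x}) •
        axisToImag p hp • z := by
  have hz : (z : ℂ) - α ≠ 0 := sub_ne_zero.2 (z.ne_ofReal α)
  have hzp : (z : ℂ) + p ≠ 0 := by simpa [sub_eq_add_neg] using sub_ne_zero.2 (z.ne_ofReal (-p))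
  have hαp : (α : ℂ) - p ≠ 0 := by exact_mod_cast (sub_pos.2 hpα).ne'
  have hα : (α : ℂ) ^ 2 - r ^ 2 = p ^ 2 := by exact_mod_cast hpαr.symm
  have hnum : (-α * (z : ℂ) + p ^ 2) / (z - α) - p = -(α + p) * (z - p) / (z - α) := by
    field_simp; ring
  have hden : (-α * (z : ℂ) + p ^ 2) / (z - α) + p = -(α - p) * (z + p) / (z - α) := by
    field_simp; ring
  ext1
  rw [coe_pos_real_smul, coe_axisToImag_smul, coe_axisToImag_smul, coe_Mmat_smul, hα, hnum, hden,
    real_smul]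
  push_cast
  field_simp

end UpperHalfPlane

lemma exists_pos_lt_sq_eq_sq_sub_sq {α r : ℝ} (hr : r ≠ 0) (hrα : |r| < α) :
    ∃ p, 0 < p ∧ p < α ∧ p ^ 2 = α ^ 2 - r ^ 2 := by
  have hα : 0 < α := (abs_nonneg r).trans_lt hrα
  have hr2 : 0 < r ^ 2 := by positivity
  have hrα2 : r ^ 2 < α ^ 2 := by
    simpa only [sq_abs] using pow_lt_pow_left₀ hrα (abs_nonneg r) two_ne_zero
  exact ⟨√(α ^ 2 - r ^ 2), Real.sqrt_pos.2 (by linarith), (Real.sqrt_lt' hα).2 (by linarith),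
    Real.sq_sqrt (by linarith)⟩

open UpperHalfPlane in
theorem nonempty_homeomorph_orbitSpace_Mmat {α r : ℝ} (hr : r ≠ 0) (hrα : |r| < α) :
    Nonempty (Quotient (MulAction.orbitRel (Subgroup.zpowers (Mmat α r hr)) ℍ) ≃ₜ
      ({0}ᶜ : Set ℂ)) := by
  obtain ⟨p, hp, hpα, hpαr⟩ := exists_pos_lt_sq_eq_sq_sub_sq hr hrα
  have hscale : 1 < (α + p) / (α - p) := (one_lt_div (sub_pos.2 hpα)).2 (by linarith)
  let Φ := (Homeomorph.smul (axisToImag p hp)).trans logImCoords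
  have hΦ (z : ℍ) : Φ (Mmat α r hr • z) = ((Φ z).1 + Real.log ((α + p) / (α - p)), (Φ z).2) :=
    (congrArg logImCoords (axisToImag_smul_Mmat_smul hr hp hpα hpαr z)).trans
      (logImCoords_pos_real_smul _ _)
  exact ⟨(zpowersQuotientHomeomorphAddCircleProd Φ _ _ hΦ).trans
    (addCircleProdRealHomeomorphComplZero (Real.log_pos hscale).ne')⟩

/-- `M(3/2,1/12)` is the matrix `!![−18, 323/12; 12, −18]`, and the orbit space of `ℍ` under
the cyclic subgroup it generates is homeomorphic to the punctured plane `ℂ \ {0}`. -/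
theorem stmt_19 :
    (g₀ : Matrix (Fin 2) (Fin 2) ℝ) = !![(-18 : ℝ), 323 / 12; 12, -18] ∧
      Nonempty (Cyl ≃ₜ ↥({(0 : ℂ)}ᶜ : Set ℂ)) := by
  refine ⟨?_, nonempty_homeomorph_orbitSpace_Mmat _ (by norm_num [abs_of_pos])⟩
  ext i j
  fin_cases i <;> fin_cases j <;> norm_num [g₀, Mmat, Nmat]
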